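/- In Setup B, let J ∈ Λ with n+1 ∈ J, fix i₀ ∈ I'∖J, and let c = (c_i)_{i∈J} be integers. Then F(J,c) ⊆ C(J,c); that is, every x ∈ F(J,c) satisfies ⟨x, b_i⟩ > c_i for all i ∈ J (including the inequality ⟨x, b_{n+1}⟩ > c_{n+1}). -/

import Mathlib

/-! On `F(J,c)` every constraint of `C(J,c)` indexed by `J ∖ {n+1}` is either imposed directly or
implied by it, since `m_i ≥ 0` on `I' ∩ J`. For `n+1`, expand
`⟨x, b_{n+1}⟩ = Σ_{i∈I'} α_i ⟨x, b_i⟩` and bound each term from below using `α_i > 0`: the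
ceiling in the constraint on `b_{i₀}` is chosen exactly so that the lower bounds add up to
at least `c_{n+1}`. -/

open scoped RealInnerProductSpace BigOperators

noncomputable section

/-- Euclidean space `ℝⁿ` with the standard inner product. -/
abbrev E (n : ℕ) : Type := EuclideanSpace ℝ (Fin n)

/-- The index set `I' = {1,…,n'}` inside `Ī = {1,…,n+1}` (index `Fin.last n`
plays the role of `n+1`). -/
def Iprime (n n' : ℕ) : Finset (Fin (n + 1)) := Finset.univ.filter fun i => i.val < n'

/-- `C(J,c) := {x ∈ ℝⁿ : ⟨x, b_i⟩ > c_i for all i ∈ J}`. -/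
def CSet (n : ℕ) (b : Fin (n + 1) → E n) (J : Finset (Fin (n + 1)))
    (c : Fin (n + 1) → ℤ) : Set (E n) :=
  {x | ∀ i ∈ J, (c i : ℝ) < ⟪x, b i⟫}

/-- A multi-index `𝔪 = (m_i)_{i ∈ I'∖{i₀}}` is admissible if `m_i ≥ 0` for every
`i ∈ I' ∩ J` (recall `i₀ ∉ J`). -/
def Admissible (n n' : ℕ) (J : Finset (Fin (n + 1))) (m : Fin (n + 1) → ℤ) : Prop :=
  ∀ i ∈ Iprime n n' ∩ J, 0 ≤ m i

/-- The ceiling bound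
`⌈(c_{n+1} − Σ_{i∈I'∩J} α_i(c_i+m_i) − Σ_{i∈I'∩K₁} α_i m_i)/α_{i₀}⌉`,
where `K₁ = Ī∖(J∪{i₀})`, so `I'∩K₁ = (I'∖J)∖{i₀}`. -/
def ceilB (n n' : ℕ) (α : Fin (n + 1) → ℚ) (J : Finset (Fin (n + 1)))
    (i₀ : Fin (n + 1)) (c m : Fin (n + 1) → ℤ) : ℤ :=
  ⌈((c (Fin.last n) : ℚ) - ∑ i ∈ Iprime n n' ∩ J, α i * ((c i : ℚ) + (m i : ℚ))
      - ∑ i ∈ (Iprime n n' \ J).erase i₀, α i * (m i : ℚ)) / α i₀⌉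

/-- `V(J,c,𝔪)` as in Setup B. -/
def VSet (n n' : ℕ) (b : Fin (n + 1) → E n) (α : Fin (n + 1) → ℚ)
    (J : Finset (Fin (n + 1))) (i₀ : Fin (n + 1)) (c m : Fin (n + 1) → ℤ) :
    Set (E n) :=
  {x | (∀ i ∈ Iprime n n' ∩ J, ((c i : ℝ) + (m i : ℝ)) < ⟪x, b i⟫)
    ∧ (∀ i ∈ (Iprime n n' \ J).erase i₀, (m i : ℝ) < ⟪x, b i⟫)
    ∧ (∀ i ∈ (J \ Iprime n n').erase (Fin.last n), (c i : ℝ) < ⟪x, b i⟫)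
    ∧ ((ceilB n n' α J i₀ c m : ℝ) < ⟪x, b i₀⟫)}

/-- `F(J,c) := ⋃_{𝔪 admissible} V(J,c,𝔪)` (for `n+1 ∈ J`, with the choice `i₀`). -/
def FSetB (n n' : ℕ) (b : Fin (n + 1) → E n) (α : Fin (n + 1) → ℚ)
    (J : Finset (Fin (n + 1))) (i₀ : Fin (n + 1)) (c : Fin (n + 1) → ℤ) : Set (E n) :=
  {x | ∃ m : Fin (n + 1) → ℤ, Admissible n n' J m ∧ x ∈ VSet n n' b α J i₀ c m}

/-- `F(J,c)` in general: the union above when `n+1 ∈ J`, and `C(J,c)` otherwise. -/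
def FSetB' (n n' : ℕ) (b : Fin (n + 1) → E n) (α : Fin (n + 1) → ℚ)
    (J : Finset (Fin (n + 1))) (i₀ : Fin (n + 1)) (c : Fin (n + 1) → ℤ) : Set (E n) :=
  if Fin.last n ∈ J then FSetB n n' b α J i₀ c else CSet n b J c

theorem Finset.sum_eq_sum_inter_add_sum_sdiff_erase_add {ι M : Type*} [DecidableEq ι]
    [AddCommMonoid M] (s J : Finset ι) {i₀ : ι} (hi₀ : i₀ ∈ s \ J) (f : ι → M) :
    ∑ i ∈ s, f i = ∑ i ∈ s ∩ J, f i + (∑ i ∈ (s \ J).erase i₀, f i + f i₀) := by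
  rw [← Finset.sum_inter_add_sum_sdiff s J f, ← Finset.sum_erase_add _ _ hi₀]

theorem le_ceil_div_mul {K : Type*} [Field K] [LinearOrder K] [IsStrictOrderedRing K]
    [FloorRing K] (q : K) {a : K} (ha : 0 < a) : q ≤ ⌈q / a⌉ * a :=
  (div_le_iff₀ ha).mp (Int.le_ceil _)

section SetupB

variable {n n' : ℕ} {b : Fin (n + 1) → E n} {α : Fin (n + 1) → ℚ}

theorem lt_of_mem_Iprime {i : Fin (n + 1)} (hi : i ∈ Iprime n n') : i.val < n' :=
  (Finset.mem_filter.mp hi).2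

theorem inner_last_eq_sum (hlast : b (Fin.last n) = ∑ i ∈ Iprime n n', (α i : ℝ) • b i)
    (x : E n) : ⟪x, b (Fin.last n)⟫ = ∑ i ∈ Iprime n n', (α i : ℝ) * ⟪x, b i⟫ := by
  simp only [hlast, inner_sum, real_inner_smul_right]

theorem lt_inner_last_of_mem_VSet (hα : ∀ i : Fin (n + 1), i.val < n' → 0 < α i)
    (hlast : b (Fin.last n) = ∑ i ∈ Iprime n n', (α i : ℝ) • b i)
    {J : Finset (Fin (n + 1))} {i₀ : Fin (n + 1)} (hi₀ : i₀ ∈ Iprime n n' \ J)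
    {c m : Fin (n + 1) → ℤ} {x : E n} (hx : x ∈ VSet n n' b α J i₀ c m) :
    (c (Fin.last n) : ℝ) < ⟪x, b (Fin.last n)⟫ := by
  obtain ⟨hJ, hK, -, hi₀x⟩ := hx
  have hαpos : ∀ i ∈ Iprime n n', (0 : ℝ) < α i := fun i hi ↦ by
    exact_mod_cast hα i (lt_of_mem_Iprime hi)
  have hαi₀ : 0 < α i₀ := hα i₀ (lt_of_mem_Iprime (Finset.mem_sdiff.mp hi₀).1)
  have hceil : (c (Fin.last n) : ℝ)
        - ∑ i ∈ Iprime n n' ∩ J, (α i : ℝ) * (c i + m i)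
        - ∑ i ∈ (Iprime n n' \ J).erase i₀, (α i : ℝ) * m i
      ≤ ceilB n n' α J i₀ c m * (α i₀ : ℝ) := by
    have hq : _ ≤ (ceilB n n' α J i₀ c m : ℚ) * α i₀ := le_ceil_div_mul _ hαi₀
    exact_mod_cast hq
  have hsumJ : ∑ i ∈ Iprime n n' ∩ J, (α i : ℝ) * (c i + m i)
      ≤ ∑ i ∈ Iprime n n' ∩ J, (α i : ℝ) * ⟪x, b i⟫ :=
    Finset.sum_le_sum fun i hi ↦ mul_le_mul_of_nonneg_left (hJ i hi).le
      (hαpos i (Finset.mem_inter.mp hi).1).le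
  have hsumK : ∑ i ∈ (Iprime n n' \ J).erase i₀, (α i : ℝ) * m i
      ≤ ∑ i ∈ (Iprime n n' \ J).erase i₀, (α i : ℝ) * ⟪x, b i⟫ :=
    Finset.sum_le_sum fun i hi ↦ mul_le_mul_of_nonneg_left (hK i hi).le
      (hαpos i (Finset.mem_sdiff.mp (Finset.mem_of_mem_erase hi)).1).le
  have hlt : (ceilB n n' α J i₀ c m : ℝ) * α i₀ < α i₀ * ⟪x, b i₀⟫ := by
    rw [mul_comm]; exact mul_lt_mul_of_pos_left hi₀x (by exact_mod_cast hαi₀)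
  rw [inner_last_eq_sum hlast, Finset.sum_eq_sum_inter_add_sum_sdiff_erase_add _ _ hi₀]
  linarith

end SetupB

theorem stmt10_general (n n' : ℕ)
    (b : Fin (n + 1) → E n) (α : Fin (n + 1) → ℚ)
    (hα : ∀ i : Fin (n + 1), i.val < n' → 0 < α i)
    (hlast : b (Fin.last n) = ∑ i ∈ Iprime n n', (α i : ℝ) • b i)
    (J : Finset (Fin (n + 1)))
    (i₀ : Fin (n + 1)) (hi₀ : i₀ ∈ Iprime n n' \ J)
    (c : Fin (n + 1) → ℤ) :
    FSetB n n' b α J i₀ c ⊆ CSet n b J c := by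
  rintro x ⟨m, hm, hx⟩ i hiJ
  by_cases hlast_i : i = Fin.last n
  · subst hlast_i
    exact lt_inner_last_of_mem_VSet hα hlast hi₀ hx
  by_cases hiI : i ∈ Iprime n n'
  · have hiIJ : i ∈ Iprime n n' ∩ J := Finset.mem_inter.mpr ⟨hiI, hiJ⟩
    have hm_nonneg : (0 : ℝ) ≤ m i := by exact_mod_cast hm i hiIJ
    linarith [hx.1 i hiIJ]
  · exact hx.2.2.1 i (Finset.mem_erase.mpr ⟨hlast_i, Finset.mem_sdiff.mpr ⟨hiJ, hiI⟩⟩)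

/-- Setup B: for `J ∈ Λ` with `n+1 ∈ J`, a choice `i₀ ∈ I'∖J`, and
integers `c`, one has `F(J,c) ⊆ C(J,c)`; that is, every `x ∈ F(J,c)` satisfies
`⟨x, b_i⟩ > c_i` for all `i ∈ J` (including `⟨x, b_{n+1}⟩ > c_{n+1}`). -/
theorem stmt10 (n n' : ℕ) (hn'1 : 1 ≤ n') (hn'n : n' ≤ n)
    (b : Fin (n + 1) → E n) (α : Fin (n + 1) → ℚ)
    (hb : LinearIndependent ℝ fun i : Fin n => b i.castSucc)
    (hspan : Submodule.span ℝ (Set.range fun i : Fin n => b i.castSucc) = ⊤)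
    (hα : ∀ i : Fin (n + 1), i.val < n' → 0 < α i)
    (hαsum : ∑ i ∈ Iprime n n', α i ≤ 1)
    (hlast : b (Fin.last n) = ∑ i ∈ Iprime n n', (α i : ℝ) • b i)
    (J : Finset (Fin (n + 1))) (hJne : J ≠ Finset.univ)
    (hJI : ¬ Iprime n n' ⊆ J) (hJlast : Fin.last n ∈ J)
    (i₀ : Fin (n + 1)) (hi₀ : i₀ ∈ Iprime n n' \ J)
    (c : Fin (n + 1) → ℤ) :
    FSetB n n' b α J i₀ c ⊆ CSet n b J c :=
  stmt10_general n n' b α hα hlast J i₀ hi₀ c
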